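/- Let a₁,…,aₙ ∈ ℤ^d generate ℤ^d, let A be the matrix with rows aᵢ, and let w₁,…,w_{n-d} be a ℤ-basis of ker(Aᵀ) ⊆ ℤⁿ. Let φ̌ : ℤ[x₁^±,…,xₙ^±] → ℤ[s₁^±,…,s_d^±] be the homomorphism xₖ ↦ s^{aₖ}, and let J be the ideal generated by the Laurent polynomials x^{wᵢ} - 1 for i = 1,…,n-d. Then ker φ̌ = J. -/

import Mathlib

/-!
Let `f : M →+ N` be a surjection of abelian groups and `s` a set-theoretic section of it.
Modulo the ideal `J` generated by the binomials `x^m - 1`, `m ∈ ker f`, every monomial `x^ν`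
is congruent to `x^(s (f ν))`, because `x^ν - x^(s (f ν)) = x^(s (f ν)) (x^(ν - s (f ν)) - 1)`.
Hence `q ≡ s_* (f_* q) mod J` for every `q`, so the kernel of `f_*` is `J`. Since the exponents
`m` with `x^m ≡ 1 mod J` form a subgroup, the binomials of generators of `ker f` already
generate `J`. For the theorem, `f` is `ν ↦ Aᵀ ν`, which is onto because the `aᵢ` generate `ℤ^d`.
-/

/-- The Laurent polynomial ring in variables indexed by `ι` over `ℤ`. -/
abbrev LaurentRing (ι : Type) : Type := AddMonoidAlgebra ℤ (ι → ℤ)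

/-- The monomial `x^ν` in the Laurent polynomial ring. -/
noncomputable def laurentMonomial {ι : Type} (ν : ι → ℤ) : LaurentRing ι :=
  AddMonoidAlgebra.single ν (1 : ℤ)

namespace AddMonoidAlgebra

open scoped AddMonoidAlgebra

variable {R M N : Type*} [CommRing R] [AddCommGroup M]

variable (R) in
noncomputable def binomialIdeal (S : Set M) : Ideal R[M] :=
  Ideal.span ((fun m ↦ single m 1 - 1) '' S)

lemma single_add_sub_one (x y : M) :
    single (x + y) (1 : R) - 1 = single x 1 * (single y 1 - 1) + (single x 1 - 1) := by
  rw [mul_sub, single_mul_single, mul_one, mul_one]; ring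

lemma single_neg_sub_one (x : M) :
    single (-x) (1 : R) - 1 = -(single (-x) 1 * (single x 1 - 1)) := by
  rw [mul_sub, single_mul_single, mul_one, neg_add_cancel, ← one_def, mul_one]; ring

lemma single_sub_one_mem_binomialIdeal {S : Set M} {m : M} (hm : m ∈ S) :
    single m (1 : R) - 1 ∈ binomialIdeal R S :=
  Ideal.subset_span ⟨m, hm, rfl⟩

lemma single_sub_one_mem_binomialIdeal_of_mem_closure {S : Set M} {m : M}
    (hm : m ∈ AddSubgroup.closure S) : single m (1 : R) - 1 ∈ binomialIdeal R S := by
  induction hm using AddSubgroup.closure_induction with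
  | mem x hx => exact single_sub_one_mem_binomialIdeal hx
  | zero => simp [one_def]
  | add x y _ _ hx hy =>
    rw [single_add_sub_one]; exact add_mem (Ideal.mul_mem_left _ _ hy) hx
  | neg x _ hx =>
    rw [single_neg_sub_one]; exact neg_mem (Ideal.mul_mem_left _ _ hx)

lemma binomialIdeal_closure (S : Set M) :
    binomialIdeal R (AddSubgroup.closure S) = binomialIdeal R S := by
  refine le_antisymm (Ideal.span_le.2 ?_)
    (Ideal.span_mono (Set.image_mono AddSubgroup.subset_closure))
  rintro _ ⟨m, hm, rfl⟩
  exact single_sub_one_mem_binomialIdeal_of_mem_closure hm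

lemma binomialIdeal_range {ι : Type*} (v : ι → M) :
    binomialIdeal R (Set.range v) = Ideal.span (Set.range fun i ↦ single (v i) 1 - 1) := by
  rw [binomialIdeal, ← Set.range_comp]
  rfl

variable [AddCommGroup N]

lemma single_sub_single_mem_binomialIdeal_ker (f : M →+ N) {x y : M} (h : f x = f y) (r : R) :
    single x r - single y r ∈ binomialIdeal R f.ker := by
  have hxy : x - y ∈ f.ker := by simp [AddMonoidHom.mem_ker, h]
  have : single x r - single y r = single y r * (single (x - y) 1 - 1) := by
    rw [mul_sub, single_mul_single, mul_one, mul_one, add_sub_cancel]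
  rw [this]
  exact Ideal.mul_mem_left _ _ (single_sub_one_mem_binomialIdeal hxy)

theorem ker_mapDomainRingHom_of_surjective (f : M →+ N) (hf : Function.Surjective f) :
    RingHom.ker (mapDomainRingHom R f) = binomialIdeal R f.ker := by
  refine le_antisymm (fun q hq ↦ ?_) (Ideal.span_le.2 ?_)
  · obtain ⟨s, hs⟩ := hf.hasRightInverse
    have key (p : R[M]) : p - mapDomain s (mapDomain f p) ∈ binomialIdeal R f.ker := by
      induction p using induction_linear with
      | zero => simp
      | add p p' hp hp' =>
        convert add_mem hp hp' using 1
        simp only [mapDomain_add]; abel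
      | single x r =>
        rw [mapDomain_single, mapDomain_single]
        exact single_sub_single_mem_binomialIdeal_ker f (hs (f x)).symm r
    have hq' : mapDomain f q = 0 := hq
    simpa [hq'] using key q
  · rintro _ ⟨m, hm, rfl⟩
    rw [SetLike.mem_coe, RingHom.mem_ker, map_sub, map_one, mapDomainRingHom_apply,
      mapDomain_single, AddMonoidHom.mem_ker.1 hm, ← one_def, sub_self]

end AddMonoidAlgebra

theorem kernel_of_monomial_map_eq_binomial_ideal_general
    (n d : ℕ) (a : Fin n → Fin d → ℤ)
    (hgen : Submodule.span ℤ (Set.range a) = (⊤ : Submodule ℤ (Fin d → ℤ)))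
    (w : Fin (n - d) → (Fin n → ℤ))
    (hker : Submodule.span ℤ (Set.range w) =
      LinearMap.ker (Matrix.toLin' (Matrix.of fun (k : Fin d) (i : Fin n) => a i k)))
    (φ : LaurentRing (Fin n) →ₐ[ℤ] LaurentRing (Fin d))
    (hφ : ∀ ν : Fin n → ℤ,
      φ (laurentMonomial ν) = laurentMonomial (fun k => ∑ i, ν i * a i k)) :
    RingHom.ker (φ : LaurentRing (Fin n) →+* LaurentRing (Fin d)) =
      Ideal.span (Set.range fun i => laurentMonomial (w i) - 1) := by
  set F := Matrix.toLin' (Matrix.of fun (k : Fin d) (i : Fin n) => a i k)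
  have hF_apply (ν : Fin n → ℤ) : F ν = fun k ↦ ∑ i, ν i * a i k := by
    ext k; simp [F, Matrix.mulVec, dotProduct, mul_comm]
  have hφF : φ = AddMonoidAlgebra.mapDomainAlgHom ℤ ℤ F.toAddMonoidHom := by
    refine AddMonoidAlgebra.algHom_ext (fun ν ↦ (hφ ν).trans ?_) (Subsingleton.elim _ _)
    simp [laurentMonomial, hF_apply]
  have hF : Function.Surjective F := by
    rw [← LinearMap.range_eq_top, Matrix.range_toLin']
    exact hgen
  have hkerF : F.toAddMonoidHom.ker = AddSubgroup.closure (Set.range w) := by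
    rw [← Submodule.span_int_eq_addSubgroupClosure, hker]; rfl
  rw [hφF]
  refine (AddMonoidAlgebra.ker_mapDomainRingHom_of_surjective _ hF).trans ?_
  rw [hkerF, AddMonoidAlgebra.binomialIdeal_closure, AddMonoidAlgebra.binomialIdeal_range]
  rfl

theorem kernel_of_monomial_map_eq_binomial_ideal
    (n d : ℕ) (a : Fin n → Fin d → ℤ)
    (hgen : Submodule.span ℤ (Set.range a) = (⊤ : Submodule ℤ (Fin d → ℤ)))
    (w : Fin (n - d) → (Fin n → ℤ))
    (hw : LinearIndependent ℤ w)
    (hker : Submodule.span ℤ (Set.range w) =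
      LinearMap.ker (Matrix.toLin' (Matrix.of fun (k : Fin d) (i : Fin n) => a i k)))
    (φ : LaurentRing (Fin n) →ₐ[ℤ] LaurentRing (Fin d))
    (hφ : ∀ ν : Fin n → ℤ,
      φ (laurentMonomial ν) = laurentMonomial (fun k => ∑ i, ν i * a i k)) :
    RingHom.ker (φ : LaurentRing (Fin n) →+* LaurentRing (Fin d)) =
      Ideal.span (Set.range fun i => laurentMonomial (w i) - 1) :=
  kernel_of_monomial_map_eq_binomial_ideal_general n d a hgen w hker φ hφ
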